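/- Consider n balls thrown independently and uniformly at random into m = n/k bins (n = k·m, k ≥ 20, n ≥ 5k, p = 1/m), let B_i be the number of balls in bin i and X = ∑_{i=1}^{m} max(B_i − k, 0). If the spare's capacity is set to 1.1·E[X], then the probability that the spare overflows satisfies P(X > 1.1·E[X]) ≤ min( 2πk/(0.01·0.99·n), exp(−0.01·m·0.99·(1−p)/(πk)) ). -/

import Mathlib

open Finset

/-- Number of balls landing in bin `i` when the throw outcome is `ω`
(ball `j` lands in bin `ω j`). -/
def binCount (n m : ℕ) (i : Fin m) (ω : Fin n → Fin m) : ℕ :=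
  (Finset.univ.filter fun j => ω j = i).card

/-- The total overflow: number of balls exceeding the capacity `k` of their bin. -/
noncomputable def overflowX (n m k : ℕ) (ω : Fin n → Fin m) : ℝ :=
  ∑ i : Fin m, max ((binCount n m i ω : ℝ) - (k : ℝ)) 0

/-- Expectation of a real-valued random variable on the uniform space of
functions `Fin n → Fin m` (balls-into-bins model). -/
noncomputable def expec (n m : ℕ) (f : (Fin n → Fin m) → ℝ) : ℝ :=
  (∑ ω : Fin n → Fin m, f ω) / (Fintype.card (Fin n → Fin m) : ℝ)

open scoped Classical in
/-- Probability of an event on the uniform space of functions `Fin n → Fin m`. -/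
noncomputable def prob (n m : ℕ) (P : (Fin n → Fin m) → Prop) : ℝ :=
  ((Finset.univ.filter P).card : ℝ) / (Fintype.card (Fin n → Fin m) : ℝ)

/-!
Moving a single ball changes `X` by at most one. Averaging out one ball at a time, Hoeffding's
lemma and the Bhatia–Davis inequality tensorize to `Var X ≤ n / 4` and
`E exp (λ (X - E X)) ≤ exp (n λ² / 2)`, which give the Chebyshev and Chernoff tails
`n / (4 t²)` and `exp (-t² / (2 n))` for `X ≥ E X + t`.

Since `∑ Bᵢ = k m`, `X = ½ ∑ |Bᵢ - k|`. Each `Dᵢ = Bᵢ - k` is a sum of `n` independent centred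
increments, so `E Dᵢ² = v := k (1 - 1/m)` and `E Dᵢ⁴ ≤ v (1 + 3 v)`, and Hölder's inequality
`(E D²)³ ≤ (E |D|)² E D⁴` yields `E X ≥ m v / (2 √(1 + 3 v))`. With `t = E X / 10` both tails
fall below the stated bounds once `k ≥ 20` and `m ≥ 5`.
-/

open Function Real
open scoped BigOperators

section Average

variable {ι : Type*} [Fintype ι] [Nonempty ι]

theorem expect_exp_mul_le_exp_sq_half {Y : ι → ℝ} (hmean : 𝔼 i, Y i = 0)
    (hY : ∀ i, |Y i| ≤ 1) (l : ℝ) : 𝔼 i, exp (l * Y i) ≤ exp (l ^ 2 / 2) := by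
  have chord : ∀ i, exp (l * Y i) ≤ cosh l + Y i * sinh l := by
    intro i
    obtain ⟨hlo, hhi⟩ := abs_le.1 (hY i)
    have h := convexOn_exp.2 (Set.mem_univ l) (Set.mem_univ (-l))
      (by linarith : (0 : ℝ) ≤ (1 + Y i) / 2) (by linarith : (0 : ℝ) ≤ (1 - Y i) / 2)
      (by ring)
    simp only [smul_eq_mul] at h
    calc exp (l * Y i) = exp ((1 + Y i) / 2 * l + (1 - Y i) / 2 * -l) := by ring_nf
      _ ≤ _ := h
      _ = cosh l + Y i * sinh l := by rw [cosh_eq, sinh_eq]; ring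
  calc 𝔼 i, exp (l * Y i) ≤ 𝔼 i, (cosh l + Y i * sinh l) := expect_le_expect fun i _ => chord i
    _ = cosh l := by
      rw [expect_add_distrib, ← expect_mul, hmean, Fintype.expect_const]; ring
    _ ≤ exp (l ^ 2 / 2) := cosh_le_exp_half_sq l

theorem expect_sq_le_one_div_four {Y : ι → ℝ} (hmean : 𝔼 i, Y i = 0)
    (hY : ∀ i j, |Y i - Y j| ≤ 1) : 𝔼 i, Y i ^ 2 ≤ 1 / 4 := by
  obtain ⟨imax, -, hmax⟩ := exists_max_image univ Y univ_nonempty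
  obtain ⟨imin, -, hmin⟩ := exists_min_image univ Y univ_nonempty
  set a := Y imax
  set b := Y imin
  -- Bhatia–Davis: `(Y - a) (Y - b) ≤ 0` pointwise, and the mean of the left side is `𝔼 Y² + a b`.
  have hpoint : ∀ i, Y i ^ 2 ≤ (a + b) * Y i - a * b := fun i => by
    nlinarith [hmax i (mem_univ _), hmin i (mem_univ _)]
  have hab : a - b ≤ 1 := (abs_le.1 (hY imax imin)).2
  calc 𝔼 i, Y i ^ 2 ≤ 𝔼 i, ((a + b) * Y i - a * b) := expect_le_expect fun i _ => hpoint i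
    _ = -(a * b) := by
      rw [expect_sub_distrib, ← mul_expect, hmean, Fintype.expect_const]; ring
    _ ≤ 1 / 4 := by nlinarith [sq_nonneg (a + b), hmin imax (mem_univ _)]

end Average

theorem sum_sq_pow_three_le {ι : Type*} (s : Finset ι) (c : ι → ℝ) :
    (∑ i ∈ s, c i ^ 2) ^ 3 ≤ (∑ i ∈ s, |c i|) ^ 2 * ∑ i ∈ s, c i ^ 4 := by
  have cs₁ : (∑ i ∈ s, c i ^ 2) ^ 2 ≤ (∑ i ∈ s, |c i|) * ∑ i ∈ s, |c i| ^ 3 :=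
    sum_sq_le_sum_mul_sum_of_sq_le_mul s (fun i _ => abs_nonneg _) (fun i _ => by positivity)
      fun i _ => by rw [← sq_abs (c i)]; ring_nf; rfl
  have cs₂ : (∑ i ∈ s, |c i| ^ 3) ^ 2 ≤ (∑ i ∈ s, c i ^ 2) * ∑ i ∈ s, c i ^ 4 :=
    sum_sq_le_sum_mul_sum_of_sq_le_mul s (fun i _ => by positivity) (fun i _ => by positivity)
      fun i _ => by rw [← sq_abs (c i), ← Even.pow_abs ⟨2, rfl⟩ (c i)]; ring_nf; rfl
  set S₂ := ∑ i ∈ s, c i ^ 2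
  have hS₁ : 0 ≤ ∑ i ∈ s, |c i| := sum_nonneg fun i _ => abs_nonneg _
  have hS₂ : 0 ≤ S₂ := sum_nonneg fun i _ => sq_nonneg _
  rcases hS₂.eq_or_lt with h | h
  · rw [← h, zero_pow three_ne_zero]; positivity
  refine le_of_mul_le_mul_left ?_ h
  calc S₂ * S₂ ^ 3 = (S₂ ^ 2) ^ 2 := by ring
    _ ≤ ((∑ i ∈ s, |c i|) * ∑ i ∈ s, |c i| ^ 3) ^ 2 := by gcongr
    _ = (∑ i ∈ s, |c i|) ^ 2 * (∑ i ∈ s, |c i| ^ 3) ^ 2 := by ring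
    _ ≤ (∑ i ∈ s, |c i|) ^ 2 * (S₂ * ∑ i ∈ s, c i ^ 4) := by gcongr
    _ = S₂ * ((∑ i ∈ s, |c i|) ^ 2 * ∑ i ∈ s, c i ^ 4) := by ring

theorem expect_sq_pow_three_le {ι : Type*} [Fintype ι] (c : ι → ℝ) :
    (𝔼 i, c i ^ 2) ^ 3 ≤ (𝔼 i, |c i|) ^ 2 * 𝔼 i, c i ^ 4 := by
  simp only [Fintype.expect_eq_sum_div_card, div_pow, div_mul_div_comm, ← pow_succ]
  gcongr
  exact sum_sq_pow_three_le univ c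

section BoundedDifferences

variable {α : Type*} {n : ℕ}

def HasBoundedDifferences (f : (Fin n → α) → ℝ) : Prop :=
  ∀ ω j a, |f (update ω j a) - f ω| ≤ 1

theorem HasBoundedDifferences.abs_sub_cons_le {f : (Fin (n + 1) → α) → ℝ}
    (hf : HasBoundedDifferences f) (a b : α) (ρ : Fin n → α) :
    |f (Fin.cons a ρ) - f (Fin.cons b ρ)| ≤ 1 := by
  simpa only [Fin.update_cons_zero] using hf (Fin.cons b ρ) 0 a

variable [Fintype α]

theorem expect_pi_fin_succ (F : (Fin (n + 1) → α) → ℝ) :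
    𝔼 ω, F ω = 𝔼 ρ, 𝔼 a, F (Fin.cons a ρ) := by
  rw [← Fintype.expect_equiv (Fin.consEquiv fun _ => α) (fun x => F (Fin.cons x.1 x.2)) F
    (fun _ => rfl), ← univ_product_univ, expect_product, expect_comm]

noncomputable def headAverage (f : (Fin (n + 1) → α) → ℝ) (ρ : Fin n → α) : ℝ :=
  𝔼 a, f (Fin.cons a ρ)

variable [Nonempty α]

theorem hasBoundedDifferences_headAverage {f : (Fin (n + 1) → α) → ℝ}
    (hf : HasBoundedDifferences f) : HasBoundedDifferences (headAverage f) := by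
  intro ρ j b
  calc |headAverage f (update ρ j b) - headAverage f ρ|
      ≤ 𝔼 a, |f (Fin.cons a (update ρ j b)) - f (Fin.cons a ρ)| := by
        rw [headAverage, headAverage, ← expect_sub_distrib]
        exact abs_expect_le _ _
    _ ≤ 1 := expect_le univ_nonempty fun a _ => by
        simpa only [Fin.cons_update] using hf (Fin.cons a ρ) j.succ b

theorem expect_sub_headAverage (f : (Fin (n + 1) → α) → ℝ) (ρ : Fin n → α) :
    𝔼 a, (f (Fin.cons a ρ) - headAverage f ρ) = 0 := by
  rw [expect_sub_distrib, Fintype.expect_const, headAverage, sub_self]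

theorem HasBoundedDifferences.abs_sub_headAverage_le {f : (Fin (n + 1) → α) → ℝ}
    (hf : HasBoundedDifferences f) (a : α) (ρ : Fin n → α) :
    |f (Fin.cons a ρ) - headAverage f ρ| ≤ 1 := by
  calc |f (Fin.cons a ρ) - headAverage f ρ| = |𝔼 b, (f (Fin.cons a ρ) - f (Fin.cons b ρ))| := by
        rw [expect_sub_distrib, Fintype.expect_const, headAverage]
    _ ≤ 𝔼 b, |f (Fin.cons a ρ) - f (Fin.cons b ρ)| := abs_expect_le _ _
    _ ≤ 1 := expect_le univ_nonempty fun b _ => hf.abs_sub_cons_le a b ρ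

theorem HasBoundedDifferences.expect_exp_mul_sub_le {f : (Fin n → α) → ℝ}
    (hf : HasBoundedDifferences f) (l : ℝ) :
    𝔼 ω, exp (l * (f ω - 𝔼 ω', f ω')) ≤ exp (n * l ^ 2 / 2) := by
  induction n with
  | zero => simp
  | succ n ih =>
    set g := headAverage f
    have hg : 𝔼 ρ, g ρ = 𝔼 ω, f ω := (expect_pi_fin_succ f).symm
    set μ := 𝔼 ω, f ω
    -- Split `f - μ = (f - g) + (g - μ)`; the first summand is centred in the head coordinate.
    have head : ∀ ρ,
        𝔼 a, exp (l * (f (Fin.cons a ρ) - μ)) ≤ exp (l ^ 2 / 2) * exp (l * (g ρ - μ)) := by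
      intro ρ
      simp_rw [show ∀ a, l * (f (Fin.cons a ρ) - μ) = l * (f (Fin.cons a ρ) - g ρ) + l * (g ρ - μ)
        from fun a => by ring, exp_add, ← expect_mul]
      exact mul_le_mul_of_nonneg_right (expect_exp_mul_le_exp_sq_half (expect_sub_headAverage f ρ)
        (hf.abs_sub_headAverage_le · ρ) l) (exp_nonneg _)
    calc 𝔼 ω, exp (l * (f ω - μ)) = 𝔼 ρ, 𝔼 a, exp (l * (f (Fin.cons a ρ) - μ)) :=
          expect_pi_fin_succ _
      _ ≤ 𝔼 ρ, exp (l ^ 2 / 2) * exp (l * (g ρ - 𝔼 ρ', g ρ')) := by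
          rw [hg]; exact expect_le_expect fun ρ _ => head ρ
      _ ≤ exp (l ^ 2 / 2) * exp (n * l ^ 2 / 2) := by
          rw [← mul_expect]
          exact mul_le_mul_of_nonneg_left (ih (hasBoundedDifferences_headAverage hf)) (exp_nonneg _)
      _ = exp ((n + 1 : ℕ) * l ^ 2 / 2) := by rw [← exp_add]; push_cast; ring_nf

theorem HasBoundedDifferences.expect_sq_sub_le {f : (Fin n → α) → ℝ}
    (hf : HasBoundedDifferences f) : 𝔼 ω, (f ω - 𝔼 ω', f ω') ^ 2 ≤ n / 4 := by
  induction n with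
  | zero => simp
  | succ n ih =>
    set g := headAverage f
    have hg : 𝔼 ρ, g ρ = 𝔼 ω, f ω := (expect_pi_fin_succ f).symm
    set μ := 𝔼 ω, f ω
    have head : ∀ ρ, 𝔼 a, (f (Fin.cons a ρ) - μ) ^ 2 ≤ 1 / 4 + (g ρ - μ) ^ 2 := by
      intro ρ
      have hcentred := expect_sub_headAverage f ρ
      have hquarter : 𝔼 a, (f (Fin.cons a ρ) - g ρ) ^ 2 ≤ 1 / 4 :=
        expect_sq_le_one_div_four hcentred fun a b => by
          simpa only [sub_sub_sub_cancel_right] using hf.abs_sub_cons_le a b ρ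
      calc 𝔼 a, (f (Fin.cons a ρ) - μ) ^ 2
          = 𝔼 a, ((f (Fin.cons a ρ) - g ρ) ^ 2 + 2 * (g ρ - μ) * (f (Fin.cons a ρ) - g ρ)
              + (g ρ - μ) ^ 2) := expect_congr rfl fun a _ => by ring
        _ = 𝔼 a, (f (Fin.cons a ρ) - g ρ) ^ 2 + (g ρ - μ) ^ 2 := by
          rw [expect_add_distrib, expect_add_distrib, ← mul_expect, hcentred,
            Fintype.expect_const]; ring
        _ ≤ 1 / 4 + (g ρ - μ) ^ 2 := by linarith
    calc 𝔼 ω, (f ω - μ) ^ 2 = 𝔼 ρ, 𝔼 a, (f (Fin.cons a ρ) - μ) ^ 2 := expect_pi_fin_succ _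
      _ ≤ 𝔼 ρ, (1 / 4 + (g ρ - 𝔼 ρ', g ρ') ^ 2) := by
          rw [hg]; exact expect_le_expect fun ρ _ => head ρ
      _ ≤ 1 / 4 + n / 4 := by
          rw [expect_add_distrib, Fintype.expect_const]
          linarith [ih (hasBoundedDifferences_headAverage hf)]
      _ = (n + 1 : ℕ) / 4 := by push_cast; ring

end BoundedDifferences

section SumMoments

variable {α : Type*}

theorem sum_apply_fin_cons {n : ℕ} (δ : α → ℝ) (a : α) (ρ : Fin n → α) :
    ∑ j, δ ((Fin.cons a ρ : Fin (n + 1) → α) j) = δ a + ∑ j, δ (ρ j) := by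
  simp [Fin.sum_univ_succ]

variable [Fintype α] [Nonempty α] {δ : α → ℝ}

theorem expect_sum_apply (hδ : 𝔼 a, δ a = 0) (n : ℕ) :
    𝔼 ω : Fin n → α, ∑ j, δ (ω j) = 0 := by
  induction n with
  | zero => simp
  | succ n ih =>
    simp only [expect_pi_fin_succ, sum_apply_fin_cons, expect_add_distrib, hδ,
      Fintype.expect_const, zero_add, ih]

theorem expect_sum_apply_sq (hδ : 𝔼 a, δ a = 0) (n : ℕ) :
    𝔼 ω : Fin n → α, (∑ j, δ (ω j)) ^ 2 = n * 𝔼 a, δ a ^ 2 := by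
  induction n with
  | zero => simp
  | succ n ih =>
    have inner : ∀ s : ℝ, 𝔼 a, (δ a + s) ^ 2 = s ^ 2 + 𝔼 a, δ a ^ 2 := fun s => by
      rw [expect_congr rfl fun a _ => show (δ a + s) ^ 2 = s ^ 2 + 2 * s * δ a + δ a ^ 2 by ring]
      simp only [expect_add_distrib, ← mul_expect, hδ, Fintype.expect_const]; ring
    simp only [expect_pi_fin_succ, sum_apply_fin_cons, inner, expect_add_distrib, ih,
      Fintype.expect_const]
    push_cast; ring

theorem expect_sum_apply_pow_four (hδ : 𝔼 a, δ a = 0) (n : ℕ) :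
    𝔼 ω : Fin n → α, (∑ j, δ (ω j)) ^ 4 =
      n * 𝔼 a, δ a ^ 4 + 3 * n * (n - 1) * (𝔼 a, δ a ^ 2) ^ 2 := by
  induction n with
  | zero => simp
  | succ n ih =>
    have inner : ∀ s : ℝ, 𝔼 a, (δ a + s) ^ 4 =
        s ^ 4 + 6 * (𝔼 a, δ a ^ 2) * s ^ 2 + 4 * (𝔼 a, δ a ^ 3) * s + 𝔼 a, δ a ^ 4 := fun s => by
      rw [expect_congr rfl fun a _ => show (δ a + s) ^ 4 = s ^ 4 + 4 * s ^ 3 * δ a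
        + 6 * s ^ 2 * δ a ^ 2 + 4 * s * δ a ^ 3 + δ a ^ 4 by ring]
      simp only [expect_add_distrib, ← mul_expect, hδ, Fintype.expect_const]; ring
    simp only [expect_pi_fin_succ, sum_apply_fin_cons, inner, expect_add_distrib, ← mul_expect, ih,
      expect_sum_apply_sq hδ, expect_sum_apply hδ, Fintype.expect_const]
    push_cast; ring

end SumMoments

section UniformModel

variable {n m : ℕ}

theorem expec_eq_expect (f : (Fin n → Fin m) → ℝ) : expec n m f = 𝔼 ω, f ω := by
  rw [expec, Fintype.expect_eq_sum_div_card]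

theorem prob_mono {P Q : (Fin n → Fin m) → Prop} (h : ∀ ω, P ω → Q ω) :
    prob n m P ≤ prob n m Q := by
  classical
  unfold prob
  gcongr
  exact h _

theorem prob_le_expec_div {P : (Fin n → Fin m) → Prop} {h : (Fin n → Fin m) → ℝ}
    (hh : ∀ ω, 0 ≤ h ω) {c : ℝ} (hc : 0 < c) (hP : ∀ ω, P ω → c ≤ h ω) :
    prob n m P ≤ expec n m h / c := by
  classical
  unfold prob expec
  rw [div_right_comm]
  gcongr
  rw [le_div_iff₀ hc]
  calc (#(univ.filter P) : ℝ) * c = #(univ.filter P) • c := by rw [nsmul_eq_mul]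
    _ ≤ ∑ ω ∈ univ.filter P, h ω := card_nsmul_le_sum _ _ _ fun ω hω => hP ω (mem_filter.1 hω).2
    _ ≤ ∑ ω, h ω := sum_le_sum_of_subset_of_nonneg (subset_univ _) fun ω _ _ => hh ω

end UniformModel

namespace HasBoundedDifferences

variable {n m : ℕ} [NeZero m] {f : (Fin n → Fin m) → ℝ} {t : ℝ}

theorem prob_ge_le_div_sq (hf : HasBoundedDifferences f) (ht : 0 < t) :
    prob n m (fun ω => expec n m f + t ≤ f ω) ≤ n / (4 * t ^ 2) := by
  calc prob n m (fun ω => expec n m f + t ≤ f ω)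
      ≤ expec n m (fun ω => (f ω - expec n m f) ^ 2) / t ^ 2 :=
        prob_le_expec_div (fun ω => sq_nonneg _) (by positivity) fun ω hω => by
          nlinarith
    _ ≤ (n / 4) / t ^ 2 := by
        gcongr
        simpa only [expec_eq_expect] using hf.expect_sq_sub_le
    _ = n / (4 * t ^ 2) := by rw [div_div]

theorem prob_ge_le_exp (hf : HasBoundedDifferences f) (hn : 0 < n) (ht : 0 < t) :
    prob n m (fun ω => expec n m f + t ≤ f ω) ≤ exp (-(t ^ 2 / (2 * n))) := by
  have hnR : (0 : ℝ) < n := by exact_mod_cast hn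
  set l := t / n
  have hl : 0 < l := by positivity
  calc prob n m (fun ω => expec n m f + t ≤ f ω)
      ≤ expec n m (fun ω => exp (l * (f ω - expec n m f))) / exp (l * t) :=
        prob_le_expec_div (fun ω => (exp_pos _).le) (exp_pos _) fun ω hω => by
          gcongr; linarith
    _ ≤ exp (n * l ^ 2 / 2) / exp (l * t) := by
        gcongr
        simpa only [expec_eq_expect] using hf.expect_exp_mul_sub_le l
    _ = exp (-(t ^ 2 / (2 * n))) := by
        rw [← exp_sub]
        congr 1
        simp only [l]
        field_simp
        ring

end HasBoundedDifferences

section Bins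

variable {n m : ℕ}

theorem binCount_sub_eq_sum (i : Fin m) (ω : Fin n → Fin m) :
    (binCount n m i ω : ℝ) - n / m = ∑ j, ((if ω j = i then 1 else 0) - 1 / m : ℝ) := by
  rw [sum_sub_distrib, sum_const, card_univ, Fintype.card_fin, nsmul_eq_mul, binCount,
    card_filter]
  push_cast
  ring

theorem expect_ite_sub_pow (i : Fin m) (r : ℕ) :
    𝔼 a : Fin m, ((if a = i then 1 else 0) - 1 / m : ℝ) ^ r =
      1 / m * (1 - 1 / m) ^ r + (1 - 1 / m) * (-(1 / m)) ^ r := by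
  have hm : (m : ℝ) ≠ 0 := by exact_mod_cast (Fin.pos i).ne'
  have split : ∀ a : Fin m, ((if a = i then 1 else 0) - 1 / m : ℝ) ^ r =
      (-(1 / m)) ^ r + if a = i then (1 - 1 / m : ℝ) ^ r - (-(1 / m)) ^ r else 0 := fun a => by
    split_ifs <;> ring
  rw [Fintype.expect_eq_sum_div_card, Fintype.card_fin, sum_congr rfl fun a _ => split a,
    sum_add_distrib, sum_ite_eq', sum_const, card_univ, Fintype.card_fin, nsmul_eq_mul]
  simp only [mem_univ, if_true]
  field_simp
  ring

theorem expect_ite_sub (i : Fin m) : 𝔼 a : Fin m, ((if a = i then 1 else 0) - 1 / m : ℝ) = 0 := by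
  have h := expect_ite_sub_pow i 1
  simp only [pow_one] at h
  rw [h]; ring

theorem expect_binCount_sub_sq (i : Fin m) :
    𝔼 ω : Fin n → Fin m, ((binCount n m i ω : ℝ) - n / m) ^ 2 = n / m * (1 - 1 / m) := by
  have : Nonempty (Fin m) := ⟨i⟩
  simp only [binCount_sub_eq_sum, expect_sum_apply_sq (expect_ite_sub i), expect_ite_sub_pow]
  ring

theorem expect_binCount_sub_pow_four_le (i : Fin m) :
    𝔼 ω : Fin n → Fin m, ((binCount n m i ω : ℝ) - n / m) ^ 4 ≤
      n / m * (1 - 1 / m) * (1 + 3 * (n / m * (1 - 1 / m))) := by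
  have : Nonempty (Fin m) := ⟨i⟩
  simp only [binCount_sub_eq_sum, expect_sum_apply_pow_four (expect_ite_sub i), expect_ite_sub_pow]
  rw [div_eq_mul_one_div (n : ℝ) m]
  generalize 1 / (m : ℝ) = p
  -- the slack is exactly `6 n p² (1 - p)²`
  nlinarith [mul_nonneg (Nat.cast_nonneg n : (0 : ℝ) ≤ n) (sq_nonneg (p * (1 - p)))]

theorem div_sqrt_le_expect_abs_binCount_sub (i : Fin m) :
    n / m * (1 - 1 / m) / √(1 + 3 * (n / m * (1 - 1 / m))) ≤
      𝔼 ω : Fin n → Fin m, |(binCount n m i ω : ℝ) - n / m| := by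
  set v : ℝ := n / m * (1 - 1 / m)
  set A := 𝔼 ω : Fin n → Fin m, |(binCount n m i ω : ℝ) - n / m|
  have hvar : 𝔼 ω : Fin n → Fin m, ((binCount n m i ω : ℝ) - n / m) ^ 2 = v :=
    expect_binCount_sub_sq i
  have hv : 0 ≤ v := hvar ▸ expect_nonneg fun ω _ => sq_nonneg _
  have hA : 0 ≤ A := expect_nonneg fun ω _ => abs_nonneg _
  have hD : 0 < 1 + 3 * v := by linarith
  have holder : v * v ^ 2 ≤ v * (A ^ 2 * (1 + 3 * v)) := by
    calc v * v ^ 2 = v ^ 3 := by ring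
      _ ≤ A ^ 2 * 𝔼 ω : Fin n → Fin m, ((binCount n m i ω : ℝ) - n / m) ^ 4 := by
        rw [← hvar]
        exact expect_sq_pow_three_le _
      _ ≤ A ^ 2 * (v * (1 + 3 * v)) := by gcongr; exact expect_binCount_sub_pow_four_le i
      _ = v * (A ^ 2 * (1 + 3 * v)) := by ring
  rw [div_le_iff₀ (sqrt_pos.2 hD), ← sqrt_sq hA, ← sqrt_mul (sq_nonneg A)]
  apply le_sqrt_of_sq_le
  rcases hv.eq_or_lt with h | h
  · rw [← h]; norm_num; positivity
  · exact le_of_mul_le_mul_left holder h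

theorem sum_binCount (ω : Fin n → Fin m) : ∑ i, (binCount n m i ω : ℝ) = n := by
  classical
  simp only [binCount]
  rw [← Nat.cast_sum, ← card_eq_sum_card_fiberwise fun j _ => mem_univ (ω j), card_univ,
    Fintype.card_fin]

theorem overflowX_eq_half_sum_abs {k : ℕ} (hn : n = k * m) (ω : Fin n → Fin m) :
    overflowX n m k ω = (∑ i, |(binCount n m i ω : ℝ) - k|) / 2 := by
  have hmax : ∀ z : ℝ, max z 0 = (z + |z|) / 2 := fun z => by
    rcases le_total z 0 with h | h
    · rw [max_eq_right h, abs_of_nonpos h]; ring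
    · rw [max_eq_left h, abs_of_nonneg h]; ring
  have hcentred : ∑ i, ((binCount n m i ω : ℝ) - k) = 0 := by
    rw [sum_sub_distrib, sum_binCount, sum_const, card_univ, Fintype.card_fin, nsmul_eq_mul, hn]
    push_cast; ring
  simp only [overflowX, hmax, ← sum_div, sum_add_distrib, hcentred, zero_add]

theorem div_sqrt_le_expec_overflowX {k : ℕ} (hn : n = k * m) :
    m * (k * (1 - 1 / m)) / (2 * √(1 + 3 * (k * (1 - 1 / m)))) ≤ expec n m (overflowX n m k) := by
  have hk : ∀ i : Fin m, (k : ℝ) = n / m := fun i => by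
    rw [hn, Nat.cast_mul, mul_div_cancel_right₀ _ (by exact_mod_cast (Fin.pos i).ne')]
  calc m * (k * (1 - 1 / m)) / (2 * √(1 + 3 * (k * (1 - 1 / m))))
      = (∑ _i : Fin m, k * (1 - 1 / m) / √(1 + 3 * (k * (1 - 1 / m)))) / 2 := by
        rw [sum_const, card_univ, Fintype.card_fin, nsmul_eq_mul]; ring
    _ ≤ (∑ i, 𝔼 ω : Fin n → Fin m, |(binCount n m i ω : ℝ) - k|) / 2 := by
        gcongr with i
        simpa only [hk i] using div_sqrt_le_expect_abs_binCount_sub i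
    _ = expec n m (overflowX n m k) := by
        rw [expec_eq_expect, ← expect_sum_comm, expect_div]
        exact expect_congr rfl fun ω _ => (overflowX_eq_half_sum_abs hn ω).symm

theorem binCount_eq_card_erase_add (ω : Fin n → Fin m) (j : Fin n) (i : Fin m) :
    (binCount n m i ω : ℝ) = #{j' ∈ univ.erase j | ω j' = i} + if ω j = i then 1 else 0 := by
  rw [binCount, card_filter, card_filter, ← add_sum_erase _ _ (mem_univ j)]
  push_cast
  ring

theorem hasBoundedDifferences_overflowX (k : ℕ) : HasBoundedDifferences (overflowX n m k) := by
  intro ω j a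
  -- With the other balls fixed, `X = X₀ + h (ω j)` where `h b ∈ [0, 1]` is the marginal
  -- overflow caused by one more ball in bin `b`.
  set C : Fin m → ℝ := fun i => #{j' ∈ univ.erase j | ω j' = i}
  set h : Fin m → ℝ := fun b => max (C b + 1 - k) 0 - max (C b - k) 0
  have decomp : ∀ ω' : Fin n → Fin m, (∀ j' ≠ j, ω' j' = ω j') →
      overflowX n m k ω' = ∑ i, max (C i - k) 0 + h (ω' j) := by
    intro ω' hω'
    have hC : ∀ i, (#{j' ∈ univ.erase j | ω' j' = i} : ℝ) = C i := fun i => by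
      congr 2
      exact filter_congr fun j' hj' => by rw [hω' j' (ne_of_mem_erase hj')]
    have hterm : ∀ i, max ((binCount n m i ω' : ℝ) - k) 0 =
        max (C i - k) 0 + if ω' j = i then h i else 0 := fun i => by
      rw [binCount_eq_card_erase_add ω' j, hC]
      split_ifs <;> simp only [h, add_zero, add_sub_cancel]
    simp only [overflowX, hterm, sum_add_distrib, sum_ite_eq, mem_univ, if_true]
  have hh : ∀ b, 0 ≤ h b ∧ h b ≤ 1 := fun b => by
    simp only [h, max_def]; constructor <;> split_ifs <;> linarith
  rw [decomp _ fun j' hj' => update_of_ne hj' a ω, decomp ω fun _ _ => rfl, update_self,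
    add_sub_add_left_eq_sub, abs_le]
  constructor <;> linarith [hh a, hh (ω j)]

end Bins

section SpareConstants

variable {k m μ : ℝ}

theorem spare_threshold_pos (hk : 20 ≤ k) (hm : 5 ≤ m)
    (hμ : m * (k * (1 - 1 / m)) / (2 * √(1 + 3 * (k * (1 - 1 / m)))) ≤ μ) : 0 < μ / 10 := by
  have hq : 0 < 1 - 1 / m := by rw [sub_pos, div_lt_one] <;> linarith
  have : 0 < m * (k * (1 - 1 / m)) / (2 * √(1 + 3 * (k * (1 - 1 / m)))) := by positivity
  linarith

theorem spare_threshold_sq_ge (hk : 20 ≤ k) (hm : 5 ≤ m)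
    (hμ : m * (k * (1 - 1 / m)) / (2 * √(1 + 3 * (k * (1 - 1 / m)))) ≤ μ) :
    (m * (k * (1 - 1 / m))) ^ 2 / (400 * (1 + 3 * (k * (1 - 1 / m)))) ≤ (μ / 10) ^ 2 := by
  set v := k * (1 - 1 / m)
  have hv : 0 < v := mul_pos (by linarith) (by rw [sub_pos, div_lt_one] <;> linarith)
  calc (m * v) ^ 2 / (400 * (1 + 3 * v)) = (m * v / (2 * √(1 + 3 * v))) ^ 2 / 100 := by
        rw [div_pow, mul_pow 2, sq_sqrt (by positivity), div_div]; ring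
    _ ≤ μ ^ 2 / 100 := by gcongr
    _ = (μ / 10) ^ 2 := by ring

theorem spare_chebyshev_le (hk : 20 ≤ k) (hm : 5 ≤ m)
    (hμ : m * (k * (1 - 1 / m)) / (2 * √(1 + 3 * (k * (1 - 1 / m)))) ≤ μ) :
    k * m / (4 * (μ / 10) ^ 2) ≤ 2 * π * k / (0.01 * 0.99 * (k * m)) := by
  have hs := spare_threshold_sq_ge hk hm hμ
  set q := 1 - 1 / m
  have hq : 4 / 5 ≤ q := by
    have : 1 / m ≤ 1 / 5 := one_div_le_one_div_of_le (by norm_num) hm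
    linarith
  have hv : 16 ≤ k * q := by nlinarith
  have core : 0.99 * (1 + 3 * (k * q)) ≤ 2 * π * (k * q) * q := by
    nlinarith [pi_gt_d2, mul_le_mul_of_nonneg_left hq (by linarith : (0 : ℝ) ≤ k * q)]
  have hT : 0 < (m * (k * q)) ^ 2 / (400 * (1 + 3 * (k * q))) := by positivity
  calc k * m / (4 * (μ / 10) ^ 2)
      ≤ k * m / (4 * ((m * (k * q)) ^ 2 / (400 * (1 + 3 * (k * q))))) := by gcongr
    _ = 100 * (0.99 * (1 + 3 * (k * q))) / (0.99 * m * (k * q) * q) := by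
        field_simp; ring
    _ ≤ 100 * (2 * π * (k * q) * q) / (0.99 * m * (k * q) * q) := by gcongr
    _ = 2 * π * k / (0.01 * 0.99 * (k * m)) := by field_simp; ring

theorem spare_chernoff_le (hk : 20 ≤ k) (hm : 5 ≤ m)
    (hμ : m * (k * (1 - 1 / m)) / (2 * √(1 + 3 * (k * (1 - 1 / m)))) ≤ μ) :
    -((μ / 10) ^ 2 / (2 * (k * m))) ≤ -0.01 * m * 0.99 * (1 - 1 / m) / (π * k) := by
  have hs := spare_threshold_sq_ge hk hm hμ
  set q := 1 - 1 / m
  have hq : 4 / 5 ≤ q := by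
    have : 1 / m ≤ 1 / 5 := one_div_le_one_div_of_le (by norm_num) hm
    linarith
  have hv : 16 ≤ k * q := by nlinarith
  have core : 7.92 * (1 + 3 * (k * q)) ≤ π * k * (k * q) := by
    nlinarith [pi_gt_d2, mul_le_mul_of_nonneg_right hk (by linarith : (0 : ℝ) ≤ k * q)]
  set D := 800 * k * (1 + 3 * (k * q)) * (π * k * (k * q))
  rw [neg_mul, neg_mul, neg_mul, neg_div, neg_le_neg_iff]
  calc 0.01 * m * 0.99 * q / (π * k) = m * (k * q) ^ 2 * (7.92 * (1 + 3 * (k * q))) / D := by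
        simp only [D]; field_simp; ring
    _ ≤ m * (k * q) ^ 2 * (π * k * (k * q)) / D := by gcongr
    _ = (m * (k * q)) ^ 2 / (400 * (1 + 3 * (k * q))) / (2 * (k * m)) := by
        simp only [D]; field_simp; ring
    _ ≤ (μ / 10) ^ 2 / (2 * (k * m)) := by gcongr

end SpareConstants

/-- With spare capacity `1.1·E[X]` (i.e. `δ = 0.1`), the
probability that the spare overflows satisfies
`P(X > 1.1·E[X]) ≤ min(2πk/(0.01·0.99·n), exp(−0.01·m·0.99·(1−p)/(πk)))`. -/
theorem spare_overflow_probability (n m k : ℕ) (hn : n = k * m)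
    (hk : 20 ≤ k) (hn5 : 5 * k ≤ n) (p : ℝ) (hp : p = 1 / (m : ℝ)) :
    prob n m (fun ω => 1.1 * expec n m (overflowX n m k) < overflowX n m k ω)
      ≤ min (2 * Real.pi * (k : ℝ) / (0.01 * 0.99 * (n : ℝ)))
          (Real.exp (-0.01 * (m : ℝ) * 0.99 * (1 - p) / (Real.pi * (k : ℝ)))) := by
  have hm : 5 ≤ m := by nlinarith
  have : NeZero m := ⟨by omega⟩
  have hkR : (20 : ℝ) ≤ k := by exact_mod_cast hk
  have hmR : (5 : ℝ) ≤ m := by exact_mod_cast hm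
  have hnR : (n : ℝ) = k * m := by rw [hn, Nat.cast_mul]
  set μ := expec n m (overflowX n m k)
  have hμ : _ ≤ μ := div_sqrt_le_expec_overflowX hn
  have ht := spare_threshold_pos hkR hmR hμ
  have hX := hasBoundedDifferences_overflowX (n := n) (m := m) k
  have hevent : prob n m (fun ω => 1.1 * μ < overflowX n m k ω) ≤
      prob n m (fun ω => μ + μ / 10 ≤ overflowX n m k ω) :=
    prob_mono fun ω h => by linarith
  refine le_min ?_ ?_
  · calc _ ≤ n / (4 * (μ / 10) ^ 2) := hevent.trans (hX.prob_ge_le_div_sq ht)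
      _ ≤ _ := by rw [hnR]; exact spare_chebyshev_le hkR hmR hμ
  · calc _ ≤ exp (-((μ / 10) ^ 2 / (2 * n))) := hevent.trans (hX.prob_ge_le_exp (by omega) ht)
      _ ≤ _ := by rw [hnR, hp]; exact exp_le_exp.2 (spare_chernoff_le hkR hmR hμ)
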